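/- For 1<q<p, the function h(s) = ((p−q)/q · a(s) + 1/s)^p / ((p/q) a(s) + 1)^{p−q}, where a(s) = ω_q(s)^q/s − 1, is strictly decreasing on (0,1), with h(1) = 1 and h(s) → +∞ as s → 0⁺. -/

import Mathlib

open Real Set Filter Topology

/-!
For `w = ω_q(s) ∈ (1, q/(q-1))` we have `s = H_q(w) = w^(q-1) (q - (q-1) w)` and
`a(s) = q (w - 1) / (q - (q-1) w)`, so both bases of `h` are quotients by `C = q - (q-1) w` and
`log h(s) = p log A - (p-q) log B - q log C` with `A = (p-q)(w-1) + w^(1-q)` and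
`B = (p-q+1) w - (p-q)`. The derivative of this function of `w` is a quotient of visibly
positive terms, while `ω_q` decreases as the inverse of the decreasing `H_q`; hence `h`
decreases. For the limit, `a ≥ 0` makes the base of the denominator at most `p/(p-q)` times
the base of the numerator, whence `h(s) ≥ ((p-q)/p)^(p-q) · s^(-q)`.
-/

lemma StrictAntiOn.strictAntiOn_of_rightInvOn {α β : Type*} [LinearOrder α] [Preorder β]
    {f : α → β} {g : β → α} {s : Set α} {t : Set β} (hf : StrictAntiOn f s)
    (hg : MapsTo g t s) (hfg : ∀ x ∈ t, f (g x) = x) : StrictAntiOn g t :=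
  fun x hx y hy hxy => by rwa [← hf.lt_iff_gt (hg hx) (hg hy), hfg x hx, hfg y hy]

namespace OmegaQ

noncomputable def H (q z : ℝ) : ℝ := q * z ^ (q - 1) - (q - 1) * z ^ q

lemma H_eq_mul {q z : ℝ} (hz : 0 < z) : H q z = z ^ (q - 1) * (q - (q - 1) * z) := by
  rw [H, show z ^ q = z ^ (q - 1) * z by rw [← rpow_add_one hz.ne', sub_add_cancel]]
  ring

lemma H_one (q : ℝ) : H q 1 = 1 := by simp [H]

lemma H_div_sub_one_eq_zero {q : ℝ} (hq : 1 < q) : H q (q / (q - 1)) = 0 := by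
  rw [H_eq_mul (div_pos (by linarith) (by linarith)), mul_div_cancel₀ q (by linarith), sub_self,
    mul_zero]

lemma hasDerivAt_H {q z : ℝ} (hz : 0 < z) :
    HasDerivAt (H q) (q * (q - 1) * (z ^ (q - 2) - z ^ (q - 1))) z := by
  have h₁ := (hasDerivAt_rpow_const (p := q - 1) (Or.inl hz.ne')).const_mul q
  have h₂ := (hasDerivAt_rpow_const (p := q) (Or.inl hz.ne')).const_mul (q - 1)
  exact (h₁.sub h₂).congr_deriv (by rw [show q - 1 - 1 = q - 2 by ring]; ring)

lemma strictAntiOn_H {q : ℝ} (hq : 1 < q) : StrictAntiOn (H q) (Ici 1) := by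
  refine strictAntiOn_of_hasDerivWithinAt_neg (convex_Ici 1)
    (fun z hz => (hasDerivAt_H (zero_lt_one.trans_le hz)).continuousAt.continuousWithinAt)
    (fun z hz => (hasDerivAt_H (zero_lt_one.trans (interior_Ici.subset hz))).hasDerivWithinAt)
    fun z hz => ?_
  rw [interior_Ici] at hz
  have hpow : z ^ (q - 2) < z ^ (q - 1) := rpow_lt_rpow_of_exponent_lt hz (by linarith)
  exact mul_neg_of_pos_of_neg (by nlinarith) (sub_neg.2 hpow)

section Inverse

variable {q : ℝ} {ω : ℝ → ℝ}

lemma omega_one (hq : 1 < q)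
    (hω : ∀ s ∈ Icc (0 : ℝ) 1, ω s ∈ Icc 1 (q / (q - 1)) ∧ H q (ω s) = s) : ω 1 = 1 := by
  obtain ⟨hmem, hH⟩ := hω 1 ⟨zero_le_one, le_rfl⟩
  exact (strictAntiOn_H hq).injOn hmem.1 (le_refl (1 : ℝ)) (by rw [hH, H_one])

lemma mapsTo_omega (hq : 1 < q)
    (hω : ∀ s ∈ Icc (0 : ℝ) 1, ω s ∈ Icc 1 (q / (q - 1)) ∧ H q (ω s) = s) :
    MapsTo ω (Ioo 0 1) (Ioo 1 (q / (q - 1))) := by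
  intro s hs
  obtain ⟨⟨h₁, h₂⟩, hH⟩ := hω s (Ioo_subset_Icc_self hs)
  refine ⟨h₁.lt_of_ne ?_, h₂.lt_of_ne ?_⟩ <;> intro hω_eq
  · rw [← hω_eq, H_one] at hH
    exact hs.2.ne hH.symm
  · rw [hω_eq, H_div_sub_one_eq_zero hq] at hH
    exact hs.1.ne hH

lemma strictAntiOn_omega (hq : 1 < q)
    (hω : ∀ s ∈ Icc (0 : ℝ) 1, ω s ∈ Icc 1 (q / (q - 1)) ∧ H q (ω s) = s) :
    StrictAntiOn ω (Ioo 0 1) :=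
  (strictAntiOn_H hq).strictAntiOn_of_rightInvOn
    (fun s hs => (hω s (Ioo_subset_Icc_self hs)).1.1)
    (fun s hs => (hω s (Ioo_subset_Icc_self hs)).2)

end Inverse

/-- `h(s)` with `ω_q(s)` replaced by an independent variable `w`. -/
noncomputable def hExpr (p q w s : ℝ) : ℝ :=
  ((p - q) / q * (w ^ q / s - 1) + 1 / s) ^ p / ((p / q) * (w ^ q / s - 1) + 1) ^ (p - q)

noncomputable def logProfile (p q w : ℝ) : ℝ :=
  p * log ((p - q) * (w - 1) + w ^ (1 - q)) - (p - q) * log ((p - q + 1) * w - (p - q))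
    - q * log (q - (q - 1) * w)

section Profile

variable {p q w : ℝ}

lemma sub_mul_pos_of_mem_Ioo (hq : 1 < q) (hw : w ∈ Ioo 1 (q / (q - 1))) :
    0 < q - (q - 1) * w := by
  have := (lt_div_iff₀' (by linarith : (0 : ℝ) < q - 1)).1 hw.2
  linarith

lemma profile_factors_pos (hpq : q ≤ p) (hw : 1 < w) :
    0 < (p - q) * (w - 1) + w ^ (1 - q) ∧ 0 < (p - q + 1) * w - (p - q) := by
  have : 0 ≤ (p - q) * (w - 1) := mul_nonneg (by linarith) (by linarith)
  exact ⟨by positivity, by linarith⟩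

lemma hExpr_H_eq_exp_logProfile (hq : 1 < q) (hpq : q ≤ p) (hw : w ∈ Ioo 1 (q / (q - 1))) :
    hExpr p q w (H q w) = exp (logProfile p q w) := by
  have hw0 : 0 < w := zero_lt_one.trans hw.1
  have hC := sub_mul_pos_of_mem_Ioo hq hw
  obtain ⟨hA, hB⟩ := profile_factors_pos hpq hw.1
  have hu : 0 < w ^ (q - 1) := rpow_pos_of_pos hw0 _
  have e₀ : w ^ q = w ^ (q - 1) * w := by rw [← rpow_add_one hw0.ne', sub_add_cancel]
  have e₁ : w ^ (1 - q) = (w ^ (q - 1))⁻¹ := by rw [← rpow_neg hw0.le, neg_sub]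
  have base₁ : (p - q) / q * (w ^ q / H q w - 1) + 1 / H q w
      = ((p - q) * (w - 1) + w ^ (1 - q)) / (q - (q - 1) * w) := by
    rw [H_eq_mul hw0, e₀, e₁]
    field_simp
    ring
  have base₂ : p / q * (w ^ q / H q w - 1) + 1
      = ((p - q + 1) * w - (p - q)) / (q - (q - 1) * w) := by
    rw [H_eq_mul hw0, e₀]
    field_simp
    ring
  rw [hExpr, base₁, base₂, rpow_def_of_pos (div_pos hA hC), rpow_def_of_pos (div_pos hB hC),
    ← exp_sub, log_div hA.ne' hC.ne', log_div hB.ne' hC.ne', logProfile]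
  ring_nf

lemma hasDerivAt_logProfile (hq : 1 < q) (hpq : q ≤ p) (hw : w ∈ Ioo 1 (q / (q - 1))) :
    HasDerivAt (logProfile p q)
      (p * ((p - q) * w * (w ^ q - 1) + q * (q - 1) * (w - 1) * ((p - q + 1) * w - (p - q)))
        / (w ^ q * ((p - q) * (w - 1) + w ^ (1 - q)) * ((p - q + 1) * w - (p - q))
          * (q - (q - 1) * w))) w := by
  have hw0 : 0 < w := zero_lt_one.trans hw.1
  have hC := sub_mul_pos_of_mem_Ioo hq hw
  obtain ⟨hA, hB⟩ := profile_factors_pos hpq hw.1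
  have dA : HasDerivAt (fun w => (p - q) * (w - 1) + w ^ (1 - q))
      ((p - q) + (1 - q) * w ^ (1 - q - 1)) w :=
    ((((hasDerivAt_id' w).sub_const 1).const_mul (p - q)).add
      (hasDerivAt_rpow_const (Or.inl hw0.ne'))).congr_deriv (by ring)
  have dB : HasDerivAt (fun w => (p - q + 1) * w - (p - q)) (p - q + 1) w := by
    simpa using ((hasDerivAt_id w).const_mul (p - q + 1)).sub_const (p - q)
  have dC : HasDerivAt (fun w => q - (q - 1) * w) (-(q - 1)) w := by
    simpa using ((hasDerivAt_id w).const_mul (q - 1)).const_sub q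
  refine ((((dA.log hA.ne').const_mul p).sub ((dB.log hB.ne').const_mul (p - q))).sub
    ((dC.log hC.ne').const_mul q)).congr_deriv ?_
  have ht : 0 < w ^ q := rpow_pos_of_pos hw0 _
  have e₁ : w ^ (1 - q) = w / w ^ q := by rw [rpow_sub hw0, rpow_one]
  have e₂ : w ^ (1 - q - 1) = 1 / w ^ q := by rw [sub_sub_cancel_left, rpow_neg hw0.le, one_div]
  rw [e₁] at hA ⊢
  rw [e₂]
  have hA' : (p - q) * w ^ q * (w - 1) + w ≠ 0 := by
    have := mul_pos hA ht
    rw [add_mul, div_mul_cancel₀ _ ht.ne'] at this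
    linarith
  have hB' : w * (p - q + 1) - (p - q) ≠ 0 := by linarith
  have hC' : q - w * (q - 1) ≠ 0 := by linarith
  generalize w ^ q = t at *
  field_simp
  ring

lemma strictMonoOn_logProfile (hq : 1 < q) (hpq : q ≤ p) :
    StrictMonoOn (logProfile p q) (Ioo 1 (q / (q - 1))) := by
  refine strictMonoOn_of_hasDerivWithinAt_pos (convex_Ioo _ _)
    (fun w hw => (hasDerivAt_logProfile hq hpq hw).continuousAt.continuousWithinAt)
    (fun w hw => (hasDerivAt_logProfile hq hpq (interior_subset hw)).hasDerivWithinAt)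
    fun w hw => ?_
  rw [interior_Ioo] at hw
  have hw0 : 0 < w := zero_lt_one.trans hw.1
  have hC := sub_mul_pos_of_mem_Ioo hq hw
  obtain ⟨hA, hB⟩ := profile_factors_pos hpq hw.1
  have ht : 1 < w ^ q := one_lt_rpow hw.1 (by linarith)
  have h₁ : 0 ≤ (p - q) * w * (w ^ q - 1) :=
    mul_nonneg (mul_nonneg (by linarith) hw0.le) (by linarith)
  have h₂ : 0 < q * (q - 1) * (w - 1) * ((p - q + 1) * w - (p - q)) :=
    mul_pos (mul_pos (mul_pos (by linarith) (by linarith)) (sub_pos.2 hw.1)) hB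
  exact div_pos (mul_pos (by linarith) (add_pos_of_nonneg_of_pos h₁ h₂)) (by positivity)

end Profile

lemma rpow_mul_le_rpow_div_rpow {p q a x : ℝ} (hq : 0 < q) (hpq : q < p) (ha : 0 ≤ a)
    (hx : 1 ≤ x) :
    x ^ q * ((p - q) / p) ^ (p - q) ≤ ((p - q) / q * a + x) ^ p / (p / q * a + 1) ^ (p - q) := by
  have hr : 0 < p - q := sub_pos.2 hpq
  have hp : 0 < p := hq.trans hpq
  set X := (p - q) / q * a + x
  have hxX : x ≤ X := le_add_of_nonneg_left (by positivity)
  have hX : 0 < X := zero_lt_one.trans_le (hx.trans hxX)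
  have hYX : p / q * a + 1 ≤ p / (p - q) * X := by
    have h₁ : 1 ≤ p / (p - q) * x :=
      one_le_mul_of_one_le_of_one_le ((one_le_div hr).2 (by linarith)) hx
    have h₂ : p / (p - q) * X = p / q * a + p / (p - q) * x := by
      simp only [X]
      field_simp
    linarith
  calc x ^ q * ((p - q) / p) ^ (p - q) ≤ X ^ q * ((p - q) / p) ^ (p - q) := by gcongr
    _ = X ^ p / (p / (p - q) * X) ^ (p - q) := by
      rw [mul_rpow (by positivity) hX.le, div_rpow hr.le hp.le, div_rpow hp.le hr.le,
        show X ^ p = X ^ q * X ^ (p - q) by rw [← rpow_add hX, add_sub_cancel]]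
      field_simp
    _ ≤ X ^ p / (p / q * a + 1) ^ (p - q) := by gcongr

end OmegaQ

open OmegaQ in
/-- For `1 < q < p`, the function
`h(s) = ((p-q)/q · a(s) + 1/s)^p / ((p/q) a(s) + 1)^(p-q)`, where
`a(s) = ω_q(s)^q/s - 1`, is strictly decreasing on `(0,1)`, with `h(1) = 1` and
`h(s) → +∞` as `s → 0⁺`. -/
theorem h_strictAnti (p q : ℝ) (hq : 1 < q) (hpq : q < p)
    (ωq : ℝ → ℝ)
    (hωq : ∀ s ∈ Icc (0 : ℝ) 1, ωq s ∈ Icc 1 (q / (q - 1)) ∧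
      q * ωq s ^ (q - 1) - (q - 1) * ωq s ^ q = s) :
    StrictAntiOn
      (fun s : ℝ => ((p - q) / q * (ωq s ^ q / s - 1) + 1 / s) ^ p
        / ((p / q) * (ωq s ^ q / s - 1) + 1) ^ (p - q)) (Ioo 0 1) ∧
    ((p - q) / q * (ωq 1 ^ q / 1 - 1) + 1 / 1) ^ p
      / ((p / q) * (ωq 1 ^ q / 1 - 1) + 1) ^ (p - q) = 1 ∧
    Tendsto
      (fun s : ℝ => ((p - q) / q * (ωq s ^ q / s - 1) + 1 / s) ^ p
        / ((p / q) * (ωq s ^ q / s - 1) + 1) ^ (p - q)) (𝓝[>] 0) atTop := by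
  have hq0 : 0 < q := by linarith
  have hmaps := mapsTo_omega hq hωq
  refine ⟨?_, by rw [omega_one hq hωq]; norm_num, ?_⟩
  · refine ((exp_strictMono.comp_strictMonoOn (strictMonoOn_logProfile hq hpq.le)).comp_strictAntiOn
      (strictAntiOn_omega hq hωq) hmaps).congr fun s hs => ?_
    change exp _ = hExpr p q (ωq s) s
    rw [← hExpr_H_eq_exp_logProfile hq hpq.le (hmaps hs)]
    exact congrArg (hExpr p q (ωq s)) (hωq s (Ioo_subset_Icc_self hs)).2
  · have hK : 0 < ((p - q) / p) ^ (p - q) :=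
      rpow_pos_of_pos (div_pos (sub_pos.2 hpq) (hq0.trans hpq)) _
    refine tendsto_atTop_mono' _ ?_
      (((tendsto_rpow_atTop hq0).comp tendsto_inv_nhdsGT_zero).atTop_mul_const hK)
    filter_upwards [Ioo_mem_nhdsGT zero_lt_one] with s hs
    have ha : 0 ≤ ωq s ^ q / s - 1 := sub_nonneg.2 ((one_le_div hs.1).2
      (hs.2.le.trans (one_le_rpow (hωq s (Ioo_subset_Icc_self hs)).1.1 hq0.le)))
    simpa only [one_div, Function.comp_apply] using
      rpow_mul_le_rpow_div_rpow hq0 hpq ha ((one_le_inv₀ hs.1).2 hs.2.le)
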